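/- arXiv:hep-th/0602053 — 4 statements merged into one kernel-verified Lean document; each statement's English description precedes it below -/
import Mathlib

section
/- Let L be a module over ℤ and B : L × L → ℤ a negative definite symmetric bilinear form. If x, y ∈ L satisfy B(x,x) = −1, B(y,y) = −1, x ≠ y and x ≠ −y, then B(x,y) = 0. -/
/-- If `B` is a negative definite symmetric integral bilinear form and
`x, y` have square `−1` with `x ≠ y` and `x ≠ −y`, then `B(x,y) = 0`. -/
theorem neg_def_square_neg_one_orthogonal
    (L : Type*) [AddCommGroup L] [Module ℤ L]
    (B : L →ₗ[ℤ] L →ₗ[ℤ] ℤ)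
    (hsymm : ∀ u v : L, B u v = B v u)
    (hneg : ∀ v : L, v ≠ 0 → B v v < 0)
    (x y : L) (hx : B x x = -1) (hy : B y y = -1)
    (hne : x ≠ y) (hne' : x ≠ -y) :
    B x y = 0 := by
  have h1 : B (x - y) (x - y) < 0 := hneg _ (sub_ne_zero.mpr hne)
  have h2 : B (x + y) (x + y) < 0 := by
    apply hneg
    intro h
    exact hne' (by rw [eq_neg_iff_add_eq_zero]; exact h)
  simp only [map_sub, map_add, LinearMap.sub_apply, LinearMap.add_apply] at h1 h2
  rw [hx, hy, hsymm y x] at h1 h2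
  omega
end

section
/- Let L be a free ℤ-module of finite rank k with a negative definite symmetric bilinear form B : L × L → ℤ. Suppose α₁, …, α_k ∈ L satisfy B(α_i, α_i) = −1 for all i, and for all i ≠ j one has α_i ≠ α_j and α_i ≠ −α_j. Then B(α_i, α_j) = −δ_{ij} for all i, j, and (α₁, …, α_k) is a ℤ-basis of L; in particular B diagonalizes over the integers with all diagonal entries equal to −1. -/
/-!
Two classes `x ≠ ±y` of square `-1` satisfy `B(x ± y, x ± y) = -2 ± 2 B(x, y) < 0`, which over `ℤ`
forces `B(x, y) = 0`, so the `αᵢ` have Gram matrix `-1` and are linearly independent. They also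
span: for any `v`, the vector `w = v + ∑ B(v, αᵢ) αᵢ` is orthogonal to every `αᵢ`, so if it were
nonzero then `w, α₁, …, α_k` would be `k + 1` independent vectors in a module of rank `k`.
-/

namespace LinearMap

variable {R M ι : Type*} [CommRing R] [AddCommGroup M] [Module R M]

theorem linearIndependent_of_pairwise_apply_eq_zero [NoZeroDivisors R] (B : M →ₗ[R] M →ₗ[R] R)
    {v : ι → M} (horth : Pairwise fun i j => B (v i) (v j) = 0) (hself : ∀ i, B (v i) (v i) ≠ 0) :
    LinearIndependent R v := by
  rw [linearIndependent_iff']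
  intro s g hg i hi
  have hpair : ∑ j ∈ s, g j * B (v j) (v i) = 0 := by
    simpa only [map_sum, map_smul, LinearMap.sum_apply, LinearMap.smul_apply, smul_eq_mul,
      map_zero, LinearMap.zero_apply] using congrArg (fun x => B x (v i)) hg
  rw [Finset.sum_eq_single_of_mem i hi fun j _ hji => by rw [horth hji, mul_zero]] at hpair
  exact (mul_eq_zero.mp hpair).resolve_right (hself i)

variable [Fintype ι] [DecidableEq ι] {B : M →ₗ[R] M →ₗ[R] R} {v : ι → M}

theorem sum_smul_apply_of_gram_eq_neg_one (hgram : ∀ i j, B (v i) (v j) = if i = j then -1 else 0)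
    (g : ι → R) (j : ι) : B (∑ i, g i • v i) (v j) = -g j := by
  simp [map_sum, hgram]

theorem eq_zero_of_forall_apply_eq_zero_of_gram_eq_neg_one [IsDomain R] [Module.Finite R M]
    (hsymm : ∀ x y : M, B x y = B y x) (hB : ∀ x : M, x ≠ 0 → B x x ≠ 0)
    (hrank : Module.finrank R M ≤ Fintype.card ι)
    (hgram : ∀ i j, B (v i) (v j) = if i = j then -1 else 0)
    {w : M} (hw : ∀ i, B w (v i) = 0) : w = 0 := by
  by_contra hw0
  have hli : LinearIndependent R fun o : Option ι => o.elim w v := by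
    refine linearIndependent_of_pairwise_apply_eq_zero B ?_ ?_
    · rintro (_ | i) (_ | j) hij
      · exact absurd rfl hij
      · exact hw j
      · exact (hsymm _ _).trans (hw i)
      · simpa [hgram, Option.some_injective _ |>.ne_iff] using hij
    · rintro (_ | i)
      · exact hB w hw0
      · simp [hgram]
  have := hli.fintype_card_le_finrank
  rw [Fintype.card_option] at this
  omega

theorem span_range_eq_top_of_gram_eq_neg_one [IsDomain R] [Module.Finite R M]
    (hsymm : ∀ x y : M, B x y = B y x) (hB : ∀ x : M, x ≠ 0 → B x x ≠ 0)
    (hrank : Module.finrank R M ≤ Fintype.card ι)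
    (hgram : ∀ i j, B (v i) (v j) = if i = j then -1 else 0) :
    Submodule.span R (Set.range v) = ⊤ := by
  refine Submodule.eq_top_iff'.mpr fun x => ?_
  have hproj : x + ∑ i, B x (v i) • v i = 0 :=
    eq_zero_of_forall_apply_eq_zero_of_gram_eq_neg_one hsymm hB hrank hgram fun j => by
      rw [map_add, LinearMap.add_apply, sum_smul_apply_of_gram_eq_neg_one hgram, add_neg_cancel]
  rw [eq_neg_of_add_eq_zero_left hproj]
  exact Submodule.neg_mem _ (Submodule.sum_mem _ fun i _ =>
    Submodule.smul_mem _ _ (Submodule.subset_span (Set.mem_range_self i)))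

theorem exists_basis_of_gram_eq_neg_one [IsDomain R] [Module.Finite R M]
    (hsymm : ∀ x y : M, B x y = B y x) (hB : ∀ x : M, x ≠ 0 → B x x ≠ 0)
    (hrank : Module.finrank R M ≤ Fintype.card ι)
    (hgram : ∀ i j, B (v i) (v j) = if i = j then -1 else 0) :
    ∃ b : Module.Basis ι R M, ∀ i, b i = v i := by
  have hli : LinearIndependent R v :=
    linearIndependent_of_pairwise_apply_eq_zero B (fun i j hij => by simp [hgram, hij])
      fun i => by simp [hgram]
  exact ⟨.mk hli (span_range_eq_top_of_gram_eq_neg_one hsymm hB hrank hgram).ge,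
    Module.Basis.mk_apply hli _⟩

end LinearMap

theorem LinearMap.apply_eq_zero_of_neg_definite_of_self_eq_neg_one {L : Type*} [AddCommGroup L]
    [Module ℤ L] {B : L →ₗ[ℤ] L →ₗ[ℤ] ℤ} (hsymm : ∀ u v : L, B u v = B v u)
    (hneg : ∀ v : L, v ≠ 0 → B v v < 0) {x y : L} (hx : B x x = -1) (hy : B y y = -1)
    (hxy : x ≠ y) (hxny : x ≠ -y) : B x y = 0 := by
  have hadd := hneg (x + y) fun h => hxny (eq_neg_of_add_eq_zero_left h)
  have hsub := hneg (x - y) (sub_ne_zero.mpr hxy)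
  simp only [map_add, map_sub, LinearMap.add_apply, LinearMap.sub_apply, hx, hy,
    hsymm y x] at hadd hsub
  omega

theorem neg_def_square_neg_one_family_is_orthonormal_basis_general
    (L : Type*) [AddCommGroup L] [Module ℤ L]
    [Module.Finite ℤ L]
    (B : L →ₗ[ℤ] L →ₗ[ℤ] ℤ)
    (hsymm : ∀ u v : L, B u v = B v u)
    (hneg : ∀ v : L, v ≠ 0 → B v v < 0)
    (k : ℕ) (hrank : Module.finrank ℤ L = k)
    (α : Fin k → L)
    (hdiag : ∀ i, B (α i) (α i) = -1)
    (hne : ∀ i j, i ≠ j → α i ≠ α j ∧ α i ≠ -α j) :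
    (∀ i j, B (α i) (α j) = if i = j then -1 else 0) ∧
      ∃ b : Module.Basis (Fin k) ℤ L, ∀ i, b i = α i := by
  have hgram : ∀ i j, B (α i) (α j) = if i = j then -1 else 0 := by
    intro i j
    split_ifs with hij
    · exact hij ▸ hdiag i
    · exact LinearMap.apply_eq_zero_of_neg_definite_of_self_eq_neg_one hsymm hneg (hdiag i)
        (hdiag j) (hne i j hij).1 (hne i j hij).2
  exact ⟨hgram, LinearMap.exists_basis_of_gram_eq_neg_one hsymm (fun v hv => (hneg v hv).ne)
    (by rw [hrank, Fintype.card_fin]) hgram⟩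

/-- Lattice-theoretic content of Lemma 2: if `L` is a free `ℤ`-module of
finite rank `k` with a negative definite symmetric bilinear form `B`, and
`α₁, …, α_k` have square `−1` with `αᵢ ≠ ±αⱼ` for `i ≠ j`, then the Gram
matrix is minus the identity and `(α₁, …, α_k)` is a `ℤ`-basis of `L`;
in particular `B` diagonalizes over `ℤ` with diagonal entries `−1`. -/
theorem neg_def_square_neg_one_family_is_orthonormal_basis
    (L : Type*) [AddCommGroup L] [Module ℤ L]
    [Module.Free ℤ L] [Module.Finite ℤ L]
    (B : L →ₗ[ℤ] L →ₗ[ℤ] ℤ)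
    (hsymm : ∀ u v : L, B u v = B v u)
    (hneg : ∀ v : L, v ≠ 0 → B v v < 0)
    (k : ℕ) (hrank : Module.finrank ℤ L = k)
    (α : Fin k → L)
    (hdiag : ∀ i, B (α i) (α i) = -1)
    (hne : ∀ i j, i ≠ j → α i ≠ α j ∧ α i ≠ -α j) :
    (∀ i j, B (α i) (α j) = if i = j then -1 else 0) ∧
      ∃ b : Module.Basis (Fin k) ℤ L, ∀ i, b i = α i :=
  neg_def_square_neg_one_family_is_orthonormal_basis_general L B hsymm hneg k hrank α hdiag hne
end

section
/- Let L be a free ℤ-module of finite rank k with a negative definite symmetric bilinear form B : L × L → ℤ. Suppose α₁, …, α_k ∈ L satisfy B(α_i, α_i) = −1 for all i, and for all i ≠ j one has α_i ≠ α_j and α_i ≠ −α_j. Then there is a ℤ-linear isomorphism f : L ≃ ℤ^k such that B(x, y) = −∑_{i=1}^{k} f(x)_i · f(y)_i for all x, y ∈ L, i.e. (L, B) is isometric to the standard negative definite diagonal lattice ⟨−1⟩ ⊕ ⋯ ⊕ ⟨−1⟩ (k copies). -/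
/-!
Two distinct vectors `a ≠ ±b` of square `-1` are orthogonal: `(a ± b)² = -2 ± 2 B(a, b)` are both
negative, which forces the integer `B(a, b)` to vanish. So the `αᵢ` are orthonormal for `-B`, and
`x ↦ (-B(x, αᵢ))ᵢ` recovers the coefficients of any combination of the `αᵢ`. Its defect
`x - ∑ᵢ (-B(x, αᵢ)) αᵢ` is orthogonal to every `αᵢ`; were it nonzero, it would be independent of the
`αᵢ` by definiteness, giving `k + 1` independent vectors in a module of rank `k`.
-/

open Module

section Orthonormal

variable {R L ι : Type*} [CommRing R] [AddCommGroup L] [Module R L]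

/-- Coordinates with respect to a family that is orthonormal for `-B`. -/
def negCoords (B : L →ₗ[R] L →ₗ[R] R) (α : ι → L) : L →ₗ[R] ι → R :=
  LinearMap.pi fun i => -B.flip (α i)

@[simp]
lemma negCoords_apply (B : L →ₗ[R] L →ₗ[R] R) (α : ι → L) (x : L) (i : ι) :
    negCoords B α x i = -B x (α i) :=
  rfl

variable [Fintype ι] {B : L →ₗ[R] L →ₗ[R] R} {α : ι → L}
  (hdiag : ∀ i, B (α i) (α i) = -1) (horth : Pairwise fun i j => B (α i) (α j) = 0)
include hdiag horth

lemma apply_sum_smul_left (c : ι → R) (j : ι) : B (∑ i, c i • α i) (α j) = -c j := by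
  classical
  rw [map_sum, LinearMap.sum_apply, Finset.sum_eq_single j]
  · simp [hdiag]
  · intro i _ hij
    simp [horth hij]
  · simp

lemma apply_sum_smul_sum_smul (c d : ι → R) :
    B (∑ i, c i • α i) (∑ i, d i • α i) = -∑ i, c i * d i := by
  rw [map_sum, ← Finset.sum_neg_distrib]
  refine Finset.sum_congr rfl fun j _ => ?_
  rw [map_smul, apply_sum_smul_left hdiag horth, smul_eq_mul, mul_neg, mul_comm]

lemma negCoords_sum_smul (c : ι → R) : negCoords B α (∑ i, c i • α i) = c := by
  ext j
  rw [negCoords_apply, apply_sum_smul_left hdiag horth, neg_neg]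

lemma linearIndependent_of_orthonormal : LinearIndependent R α := by
  refine Fintype.linearIndependent_iff.2 fun c hc => ?_
  have hc' := negCoords_sum_smul hdiag horth c
  rw [hc, map_zero] at hc'
  exact fun i => congrFun hc'.symm i

lemma apply_sub_sum_negCoords_smul (x : L) (j : ι) :
    B (x - ∑ i, negCoords B α x i • α i) (α j) = 0 := by
  rw [map_sub, LinearMap.sub_apply, apply_sum_smul_left hdiag horth, negCoords_apply, neg_neg,
    sub_self]

end Orthonormal

lemma apply_mem_span_eq_zero {R L ι : Type*} [CommRing R] [AddCommGroup L] [Module R L]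
    {B : L →ₗ[R] L →ₗ[R] R} {α : ι → L} {y : L} (hy : ∀ i, B y (α i) = 0) {z : L}
    (hz : z ∈ Submodule.span R (Set.range α)) : B y z = 0 :=
  (Submodule.span_le (p := LinearMap.ker (B y))).2 (Set.range_subset_iff.2 hy) hz

section Definite

variable {R L : Type*} [CommRing R] [IsDomain R] [AddCommGroup L] [Module R L] [Module.Finite R L]
  {B : L →ₗ[R] L →ₗ[R] R}

lemma eq_zero_of_forall_apply_eq_zero (hanis : ∀ v : L, v ≠ 0 → B v v ≠ 0) {k : ℕ}
    (hrank : finrank R L ≤ k) {α : Fin k → L} (hα : LinearIndependent R α) {y : L}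
    (hy : ∀ i, B y (α i) = 0) : y = 0 := by
  by_contra hy0
  have hcons : LinearIndependent R (Fin.cons y α : Fin (k + 1) → L) := by
    refine LinearIndependent.finCons' y α hα fun c z hz hcz => ?_
    have h := congrArg (B y) hcz
    rw [map_add, map_smul, apply_mem_span_eq_zero hy hz, smul_eq_mul, add_zero, map_zero] at h
    exact (mul_eq_zero.1 h).resolve_right (hanis y hy0)
  have := hcons.fintype_card_le_finrank
  simp only [Fintype.card_fin] at this
  omega

variable (hanis : ∀ v : L, v ≠ 0 → B v v ≠ 0) {k : ℕ} (hrank : finrank R L ≤ k) {α : Fin k → L}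
  (hdiag : ∀ i, B (α i) (α i) = -1) (horth : Pairwise fun i j => B (α i) (α j) = 0)
include hanis hrank hdiag horth

lemma sum_negCoords_smul (x : L) : ∑ i, negCoords B α x i • α i = x :=
  (sub_eq_zero.1 <| eq_zero_of_forall_apply_eq_zero hanis hrank
    (linearIndependent_of_orthonormal hdiag horth)
    (apply_sub_sum_negCoords_smul hdiag horth x)).symm

lemma negCoords_bijective : Function.Bijective (negCoords B α) :=
  Function.bijective_iff_has_inverse.2 ⟨fun c => ∑ i, c i • α i,
    sum_negCoords_smul hanis hrank hdiag horth, negCoords_sum_smul hdiag horth⟩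

lemma apply_eq_neg_sum_negCoords_mul (x y : L) :
    B x y = -∑ i, negCoords B α x i * negCoords B α y i := by
  conv_lhs => rw [← sum_negCoords_smul hanis hrank hdiag horth x,
    ← sum_negCoords_smul hanis hrank hdiag horth y]
  exact apply_sum_smul_sum_smul hdiag horth _ _

end Definite

lemma apply_eq_zero_of_apply_self_eq_neg_one {L : Type*} [AddCommGroup L] [Module ℤ L]
    {B : L →ₗ[ℤ] L →ₗ[ℤ] ℤ} (hsymm : ∀ u v : L, B u v = B v u)
    (hneg : ∀ v : L, v ≠ 0 → B v v < 0) {a b : L} (ha : B a a = -1) (hb : B b b = -1)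
    (hab : a ≠ b) (hab' : a ≠ -b) : B a b = 0 := by
  have hsub : B (a - b) (a - b) < 0 := hneg _ (sub_ne_zero.2 hab)
  have hadd : B (a + b) (a + b) < 0 := hneg _ fun h => hab' (eq_neg_of_add_eq_zero_left h)
  simp only [map_sub, map_add, LinearMap.sub_apply, LinearMap.add_apply, ha, hb, hsymm b a]
    at hsub hadd
  omega

theorem neg_def_isometric_to_standard_diagonal_general
    (L : Type*) [AddCommGroup L] [Module ℤ L]
    [Module.Finite ℤ L]
    (B : L →ₗ[ℤ] L →ₗ[ℤ] ℤ)
    (hsymm : ∀ u v : L, B u v = B v u)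
    (hneg : ∀ v : L, v ≠ 0 → B v v < 0)
    (k : ℕ) (hrank : Module.finrank ℤ L = k)
    (α : Fin k → L)
    (hdiag : ∀ i, B (α i) (α i) = -1)
    (hne : ∀ i j, i ≠ j → α i ≠ α j ∧ α i ≠ -α j) :
    ∃ f : L ≃ₗ[ℤ] (Fin k → ℤ),
      ∀ x y : L, B x y = -∑ i : Fin k, f x i * f y i := by
  have horth : Pairwise fun i j => B (α i) (α j) = 0 := fun i j hij =>
    apply_eq_zero_of_apply_self_eq_neg_one hsymm hneg (hdiag i) (hdiag j) (hne i j hij).1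
      (hne i j hij).2
  have hanis : ∀ v : L, v ≠ 0 → B v v ≠ 0 := fun v hv => (hneg v hv).ne
  exact ⟨.ofBijective _ (negCoords_bijective hanis hrank.le hdiag horth),
    apply_eq_neg_sum_negCoords_mul hanis hrank.le hdiag horth⟩

/-- If `L` is a free `ℤ`-module of finite rank `k` with a negative
definite symmetric bilinear form `B` and `α₁, …, α_k` have square `−1`
with `αᵢ ≠ ±αⱼ` for `i ≠ j`, then `(L, B)` is isometric to the standard
negative definite diagonal lattice `⟨−1⟩ ⊕ ⋯ ⊕ ⟨−1⟩` (`k` copies). -/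
theorem neg_def_isometric_to_standard_diagonal
    (L : Type*) [AddCommGroup L] [Module ℤ L]
    [Module.Free ℤ L] [Module.Finite ℤ L]
    (B : L →ₗ[ℤ] L →ₗ[ℤ] ℤ)
    (hsymm : ∀ u v : L, B u v = B v u)
    (hneg : ∀ v : L, v ≠ 0 → B v v < 0)
    (k : ℕ) (hrank : Module.finrank ℤ L = k)
    (α : Fin k → L)
    (hdiag : ∀ i, B (α i) (α i) = -1)
    (hne : ∀ i j, i ≠ j → α i ≠ α j ∧ α i ≠ -α j) :
    ∃ f : L ≃ₗ[ℤ] (Fin k → ℤ),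
      ∀ x y : L, B x y = -∑ i : Fin k, f x i * f y i :=
  neg_def_isometric_to_standard_diagonal_general L B hsymm hneg k hrank α hdiag hne
end

section
/- Let L be a free ℤ-module of finite rank k with a negative definite symmetric bilinear form B : L × L → ℤ containing elements α₁, …, α_k with B(α_i, α_i) = −1 for all i and α_i ≠ ±α_j for i ≠ j. Then for every ℤ-basis (e₁, …, e_k) of L, the determinant of the Gram matrix (B(e_i, e_j)) equals (−1)^k; in particular B is unimodular. -/
/-!
Two vectors of norm `-1` that are not equal up to sign are orthogonal for an integral negative
definite form, so the `αᵢ` have Gram matrix `-1`. Writing the `αᵢ` in a basis `e` with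
coefficient matrix `C` gives `Cᵀ G C = -1` for the Gram matrix `G` of `e`; hence `(det C)²`
divides a unit of `ℤ`, so it is `1`, and `det G = (-1)^k`.
-/

open Matrix

theorem LinearMap.apply_eq_zero_of_apply_self_eq_neg_one {L : Type*} [AddCommGroup L]
    [Module ℤ L] (B : L →ₗ[ℤ] L →ₗ[ℤ] ℤ) (hsymm : ∀ u v : L, B u v = B v u)
    (hneg : ∀ v : L, v ≠ 0 → B v v < 0) {x y : L} (hx : B x x = -1) (hy : B y y = -1)
    (hxy : x ≠ y) (hxny : x ≠ -y) : B x y = 0 := by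
  -- `B (x ± y) (x ± y) = -2 ± 2 B x y < 0` puts the integer `B x y` strictly between `-1` and `1`.
  have hplus := hneg (x + y) fun h => hxny (eq_neg_of_add_eq_zero_left h)
  have hminus := hneg (x - y) (sub_ne_zero.mpr hxy)
  simp only [map_add, map_sub, add_apply, sub_apply, hx, hy, hsymm y x] at hplus hminus
  omega

theorem gram_eq_neg_one_of_apply_self_eq_neg_one {L ι : Type*} [AddCommGroup L] [Module ℤ L]
    [DecidableEq ι] (B : L →ₗ[ℤ] L →ₗ[ℤ] ℤ) (hsymm : ∀ u v : L, B u v = B v u)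
    (hneg : ∀ v : L, v ≠ 0 → B v v < 0) (α : ι → L) (hdiag : ∀ i, B (α i) (α i) = -1)
    (hne : ∀ i j, i ≠ j → α i ≠ α j ∧ α i ≠ -α j) :
    Matrix.of (fun i j => B (α i) (α j)) = -1 := by
  ext i j
  obtain rfl | hij := eq_or_ne i j
  · simp [hdiag]
  · simpa [hij] using B.apply_eq_zero_of_apply_self_eq_neg_one hsymm hneg (hdiag i) (hdiag j)
      (hne i j hij).1 (hne i j hij).2

theorem gram_eq_transpose_toMatrix_mul_gram_mul {R M ι ι' : Type*} [CommRing R] [AddCommGroup M]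
    [Module R M] [Fintype ι] (B : M →ₗ[R] M →ₗ[R] R) (e : Module.Basis ι R M) (v : ι' → M) :
    Matrix.of (fun i j => B (v i) (v j)) =
      (e.toMatrix v)ᵀ * Matrix.of (fun a b => B (e a) (e b)) * e.toMatrix v := by
  ext i j
  rw [of_apply]
  conv_lhs => rw [← e.sum_repr (v i), ← e.sum_repr (v j)]
  simp only [map_sum, map_smul, LinearMap.sum_apply, LinearMap.smul_apply, smul_eq_mul,
    Matrix.mul_apply, transpose_apply, of_apply, Module.Basis.toMatrix_apply,
    Finset.sum_mul, Finset.mul_sum]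
  refine Finset.sum_congr rfl fun a _ => Finset.sum_congr rfl fun b _ => ?_
  ring

theorem Matrix.det_eq_of_transpose_mul_mul_eq {n : Type*} [Fintype n] [DecidableEq n]
    {C G D : Matrix n n ℤ} (h : Cᵀ * G * C = D) (hD : IsUnit D.det) : G.det = D.det := by
  have hdet : G.det * C.det ^ 2 = D.det := by
    rw [← h, det_mul, det_mul, det_transpose]; ring
  have hC : C.det ^ 2 = 1 :=
    Int.isUnit_sq ((isUnit_pow_iff two_ne_zero).mp (isUnit_of_mul_isUnit_right (hdet ▸ hD)))
  rwa [hC, mul_one] at hdet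

theorem neg_def_gram_det_eq_neg_one_pow_general
    (L : Type*) [AddCommGroup L] [Module ℤ L]
    (B : L →ₗ[ℤ] L →ₗ[ℤ] ℤ)
    (hsymm : ∀ u v : L, B u v = B v u)
    (hneg : ∀ v : L, v ≠ 0 → B v v < 0)
    (k : ℕ)
    (α : Fin k → L)
    (hdiag : ∀ i, B (α i) (α i) = -1)
    (hne : ∀ i j, i ≠ j → α i ≠ α j ∧ α i ≠ -α j) :
    ∀ e : Module.Basis (Fin k) ℤ L,
      (Matrix.of fun i j => B (e i) (e j)).det = (-1 : ℤ) ^ k := by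
  intro e
  have hgram := gram_eq_transpose_toMatrix_mul_gram_mul B e α
  rw [gram_eq_neg_one_of_apply_self_eq_neg_one B hsymm hneg α hdiag hne] at hgram
  have hdet : (-1 : Matrix (Fin k) (Fin k) ℤ).det = (-1) ^ k := by
    rw [det_neg, det_one, Fintype.card_fin, mul_one]
  rw [det_eq_of_transpose_mul_mul_eq hgram.symm (hdet ▸ isUnit_neg_one.pow k), hdet]

/-- Under the hypotheses of Lemma 2, the determinant of the Gram matrix
of `B` in every `ℤ`-basis of `L` equals `(−1)^k`; in particular `B` is
unimodular. -/
theorem neg_def_gram_det_eq_neg_one_pow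
    (L : Type*) [AddCommGroup L] [Module ℤ L]
    [Module.Free ℤ L] [Module.Finite ℤ L]
    (B : L →ₗ[ℤ] L →ₗ[ℤ] ℤ)
    (hsymm : ∀ u v : L, B u v = B v u)
    (hneg : ∀ v : L, v ≠ 0 → B v v < 0)
    (k : ℕ) (hrank : Module.finrank ℤ L = k)
    (α : Fin k → L)
    (hdiag : ∀ i, B (α i) (α i) = -1)
    (hne : ∀ i j, i ≠ j → α i ≠ α j ∧ α i ≠ -α j) :
    ∀ e : Module.Basis (Fin k) ℤ L,
      (Matrix.of fun i j => B (e i) (e j)).det = (-1 : ℤ) ^ k :=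
  neg_def_gram_det_eq_neg_one_pow_general L B hsymm hneg k α hdiag hne
end
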